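/- arXiv:2203.12162 — 2 statements merged into one kernel-verified Lean document; each statement's English description precedes it below -/
import Mathlib

section
/- For bounded linear operators A on H and B on K, w(A ⊗ B)² ≤ (1/2)‖ A*A ⊗ B*B + AA* ⊗ BB* ‖ ≤ ‖A‖²‖B‖². -/
open ContinuousLinearMap

/-- Numerical radius: `w(T) = sup { |⟨Tx,x⟩| : ‖x‖ = 1 }`. -/
noncomputable def nrad {E : Type*} [NormedAddCommGroup E] [InnerProductSpace ℂ E]
    (T : E →L[ℂ] E) : ℝ :=
  ⨆ x : {x : E // ‖x‖ = 1}, ‖(inner ℂ (T x.1) x.1 : ℂ)‖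

/-- `tmul` realizes `E` as the Hilbert tensor product of `H` and `K`:
the inner product is multiplicative on elementary tensors and elementary
tensors span a dense subspace. -/
structure IsHilbertTensorMap
    {H K E : Type*} [NormedAddCommGroup H] [InnerProductSpace ℂ H]
    [NormedAddCommGroup K] [InnerProductSpace ℂ K]
    [NormedAddCommGroup E] [InnerProductSpace ℂ E]
    (tmul : H →ₗ[ℂ] K →ₗ[ℂ] E) : Prop where
  inner_tmul : ∀ (x z : H) (y w : K),
    (inner ℂ (tmul x y) (tmul z w) : ℂ) = (inner ℂ x z : ℂ) * (inner ℂ y w : ℂ)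
  dense_span :
    Dense ((Submodule.span ℂ (Set.range fun p : H × K => tmul p.1 p.2) : Submodule ℂ E) : Set E)

/-- `T` is the tensor product operator `A ⊗ B`, i.e. `T (x ⊗ y) = A x ⊗ B y`. -/
def IsTensorOp {H K E : Type*} [NormedAddCommGroup H] [InnerProductSpace ℂ H]
    [NormedAddCommGroup K] [InnerProductSpace ℂ K]
    [NormedAddCommGroup E] [InnerProductSpace ℂ E]
    (tmul : H →ₗ[ℂ] K →ₗ[ℂ] E)
    (A : H →L[ℂ] H) (B : K →L[ℂ] K) (T : E →L[ℂ] E) : Prop :=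
  ∀ (x : H) (y : K), T (tmul x y) = tmul (A x) (B y)

/-! The first inequality holds for every operator: `|⟨Tx, x⟩|` is at most both `‖Tx‖` and
`‖T*x‖`, hence at most their geometric mean, and AM–GM gives
`|⟨Tx, x⟩|² ≤ ½ (‖Tx‖² + ‖T*x‖²) = ½ ⟨(T*T + TT*)x, x⟩`. For the second it suffices that
`‖A ⊗ B‖ ≤ ‖A‖‖B‖`. The operator `S = T*T = A*A ⊗ B*B` is self-adjoint, and on the span `D` of
the elementary tensors its powers grow like `‖S^m u‖ ≤ C_u (‖A‖‖B‖)^(2m)`. For self-adjoint `S`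
Cauchy–Schwarz gives `‖Su‖^(2^n) ≤ ‖S^(2^n) u‖ ‖u‖^(2^n - 1)`, so letting `n → ∞` yields
`‖Su‖ ≤ (‖A‖‖B‖)² ‖u‖` on `D`, i.e. `‖Tu‖ ≤ ‖A‖‖B‖‖u‖` on the dense set `D`. -/

open scoped InnerProduct

theorem le_of_forall_pow_two_pow_mul_le {a b c C : ℝ} (hb : 0 ≤ b) (hc : 0 < c)
    (h : ∀ n : ℕ, a ^ 2 ^ n * c ≤ C * b ^ 2 ^ n) : a ≤ b := by
  by_contra! hba
  have ha : 0 < a := hb.trans_lt hba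
  have hr0 : 0 ≤ b / a := div_nonneg hb ha.le
  have hr1 : b / a < 1 := (div_lt_one ha).2 hba
  have hbound : ∀ n : ℕ, c ≤ C * (b / a) ^ 2 ^ n := fun n => by
    rw [div_pow, mul_div_assoc', le_div_iff₀ (by positivity), mul_comm]
    exact h n
  have hlim : Filter.Tendsto (fun n : ℕ => C * (b / a) ^ 2 ^ n) Filter.atTop (nhds 0) := by
    simpa using ((tendsto_pow_atTop_nhds_zero_of_lt_one hr0 hr1).comp
      (tendsto_pow_atTop_atTop_of_one_lt one_lt_two)).const_mul C
  exact hc.not_ge (ge_of_tendsto' hlim hbound)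

theorem ContinuousLinearMap.norm_pow_apply_le {𝕜 F : Type*} [NontriviallyNormedField 𝕜]
    [SeminormedAddCommGroup F] [NormedSpace 𝕜 F] (f : F →L[𝕜] F) (n : ℕ) (x : F) :
    ‖(f ^ n) x‖ ≤ ‖f‖ ^ n * ‖x‖ := by
  induction n generalizing x with
  | zero => simp
  | succ n ih =>
    calc ‖(f ^ (n + 1)) x‖ = ‖(f ^ n) (f x)‖ := by rw [pow_succ]; rfl
      _ ≤ ‖f‖ ^ n * ‖f x‖ := ih _
      _ ≤ ‖f‖ ^ n * (‖f‖ * ‖x‖) := by gcongr; exact f.le_opNorm x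
      _ = ‖f‖ ^ (n + 1) * ‖x‖ := by ring

theorem ContinuousLinearMap.opNorm_le_of_dense {𝕜 F G : Type*} [NontriviallyNormedField 𝕜]
    [SeminormedAddCommGroup F] [NormedSpace 𝕜 F] [SeminormedAddCommGroup G] [NormedSpace 𝕜 G]
    (f : F →L[𝕜] G) {S : Set F} (hS : Dense S) {M : ℝ} (hM : 0 ≤ M)
    (h : ∀ u ∈ S, ‖f u‖ ≤ M * ‖u‖) : ‖f‖ ≤ M :=
  f.opNorm_le_bound hM fun u => hS.induction h (isClosed_le (by fun_prop) (by fun_prop)) u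

section SelfAdjoint

variable {𝕜 F : Type*} [RCLike 𝕜] [NormedAddCommGroup F] [InnerProductSpace 𝕜 F]
  [CompleteSpace F] {R : F →L[𝕜] F}

theorem IsSelfAdjoint.norm_apply_sq_le (hR : IsSelfAdjoint R) (u : F) :
    ‖R u‖ ^ 2 ≤ ‖(R ^ 2) u‖ * ‖u‖ := by
  calc ‖R u‖ ^ 2 = RCLike.re (inner 𝕜 (R u) (R u)) := (inner_self_eq_norm_sq _).symm
    _ = RCLike.re (inner 𝕜 ((R ^ 2) u) u) := by rw [sq, ← hR.isSymmetric.apply_clm]; rfl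
    _ ≤ ‖(R ^ 2) u‖ * ‖u‖ := re_inner_le_norm _ _

theorem IsSelfAdjoint.norm_apply_pow_two_pow_le (hR : IsSelfAdjoint R) (u : F) (n : ℕ) :
    ‖R u‖ ^ 2 ^ n ≤ ‖(R ^ 2 ^ n) u‖ * ‖u‖ ^ (2 ^ n - 1) := by
  induction n with
  | zero => simp
  | succ n ih =>
    have hexp : 2 ^ (n + 1) - 1 = 1 + 2 * (2 ^ n - 1) := by
      have := Nat.one_le_two_pow (n := n); rw [pow_succ]; omega
    calc ‖R u‖ ^ 2 ^ (n + 1) = (‖R u‖ ^ 2 ^ n) ^ 2 := by rw [pow_succ, pow_mul]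
      _ ≤ (‖(R ^ 2 ^ n) u‖ * ‖u‖ ^ (2 ^ n - 1)) ^ 2 := by gcongr
      _ = ‖(R ^ 2 ^ n) u‖ ^ 2 * (‖u‖ ^ (2 ^ n - 1)) ^ 2 := mul_pow _ _ _
      _ ≤ ‖((R ^ 2 ^ n) ^ 2) u‖ * ‖u‖ * (‖u‖ ^ (2 ^ n - 1)) ^ 2 := by
          gcongr; exact (hR.pow _).norm_apply_sq_le u
      _ = ‖(R ^ 2 ^ (n + 1)) u‖ * ‖u‖ ^ (2 ^ (n + 1) - 1) := by
          rw [← pow_mul, ← pow_succ, hexp, pow_add, pow_one, pow_mul]; ring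

theorem IsSelfAdjoint.norm_apply_le_of_norm_pow_apply_le (hR : IsSelfAdjoint R) {u : F}
    {C K : ℝ} (hK : 0 ≤ K) (h : ∀ m : ℕ, ‖(R ^ m) u‖ ≤ C * K ^ m) : ‖R u‖ ≤ K * ‖u‖ := by
  rcases eq_or_ne u 0 with rfl | hu
  · simp
  refine le_of_forall_pow_two_pow_mul_le (C := C) (by positivity) (norm_pos_iff.2 hu)
    fun n => ?_
  calc ‖R u‖ ^ 2 ^ n * ‖u‖ ≤ ‖(R ^ 2 ^ n) u‖ * ‖u‖ ^ (2 ^ n - 1) * ‖u‖ := by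
        gcongr; exact hR.norm_apply_pow_two_pow_le u n
    _ ≤ C * K ^ 2 ^ n * ‖u‖ ^ 2 ^ n := by
        rw [mul_assoc, pow_sub_one_mul (by positivity)]; gcongr; exact h _
    _ = C * (K * ‖u‖) ^ 2 ^ n := by ring

end SelfAdjoint

section Tensor

variable {H K E : Type*} [NormedAddCommGroup H] [InnerProductSpace ℂ H]
  [NormedAddCommGroup K] [InnerProductSpace ℂ K] [NormedAddCommGroup E] [InnerProductSpace ℂ E]
  {tmul : H →ₗ[ℂ] K →ₗ[ℂ] E}

namespace IsHilbertTensorMap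

theorem norm_tmul (htmul : IsHilbertTensorMap tmul) (x : H) (y : K) :
    ‖tmul x y‖ = ‖x‖ * ‖y‖ := by
  have h := htmul.inner_tmul x x y y
  simp only [inner_self_eq_norm_sq_to_K] at h
  exact (pow_left_inj₀ (norm_nonneg _) (by positivity) two_ne_zero).1
    (by exact_mod_cast h.trans (mul_pow _ _ _).symm)

theorem ext_inner_tmul (htmul : IsHilbertTensorMap tmul) {v v' : E}
    (h : ∀ x y, inner ℂ v (tmul x y) = inner ℂ v' (tmul x y)) : v = v' :=
  htmul.dense_span.eq_of_inner_left ℂ fun _ hw =>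
    LinearMap.eqOn_span (f := innerₛₗ ℂ v) (g := innerₛₗ ℂ v')
      (by rintro _ ⟨p, rfl⟩; exact h p.1 p.2) hw

end IsHilbertTensorMap

namespace IsTensorOp

variable {A A' : H →L[ℂ] H} {B B' : K →L[ℂ] K} {T T' : E →L[ℂ] E}

theorem mul (hT : IsTensorOp tmul A B T) (hT' : IsTensorOp tmul A' B' T') :
    IsTensorOp tmul (A * A') (B * B') (T * T') := fun x y => by
  change T (T' _) = _
  rw [hT', hT]; rfl

theorem pow (hT : IsTensorOp tmul A B T) (m : ℕ) : IsTensorOp tmul (A ^ m) (B ^ m) (T ^ m) := by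
  induction m with
  | zero => exact fun _ _ => rfl
  | succ m ih => simpa only [pow_succ] using ih.mul hT

theorem adjoint [CompleteSpace H] [CompleteSpace K] [CompleteSpace E]
    (htmul : IsHilbertTensorMap tmul) (hT : IsTensorOp tmul A B T) :
    IsTensorOp tmul (A†) (B†) (T†) := fun x y =>
  htmul.ext_inner_tmul fun z w => by
    rw [adjoint_inner_left, hT, htmul.inner_tmul, htmul.inner_tmul, adjoint_inner_left,
      adjoint_inner_left]

theorem exists_norm_pow_apply_le (htmul : IsHilbertTensorMap tmul) (hT : IsTensorOp tmul A B T)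
    {u : E} (hu : u ∈ Submodule.span ℂ (Set.range fun p : H × K => tmul p.1 p.2)) :
    ∃ C : ℝ, ∀ m : ℕ, ‖(T ^ m) u‖ ≤ C * (‖A‖ * ‖B‖) ^ m := by
  induction hu using Submodule.span_induction with
  | mem u hu =>
    obtain ⟨⟨x, y⟩, rfl⟩ := hu
    refine ⟨‖x‖ * ‖y‖, fun m => ?_⟩
    rw [hT.pow m, htmul.norm_tmul]
    calc ‖(A ^ m) x‖ * ‖(B ^ m) y‖ ≤ (‖A‖ ^ m * ‖x‖) * (‖B‖ ^ m * ‖y‖) := by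
          gcongr <;> exact norm_pow_apply_le _ _ _
      _ = ‖x‖ * ‖y‖ * (‖A‖ * ‖B‖) ^ m := by ring
  | zero => exact ⟨0, fun m => by simp⟩
  | add u v _ _ ihu ihv =>
    obtain ⟨C, hC⟩ := ihu
    obtain ⟨C', hC'⟩ := ihv
    refine ⟨C + C', fun m => ?_⟩
    rw [map_add, add_mul]
    exact (norm_add_le _ _).trans (add_le_add (hC m) (hC' m))
  | smul c u _ ihu =>
    obtain ⟨C, hC⟩ := ihu
    refine ⟨‖c‖ * C, fun m => ?_⟩
    rw [map_smul, norm_smul, mul_assoc]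
    gcongr
    exact hC m

theorem norm_le [CompleteSpace H] [CompleteSpace K] [CompleteSpace E]
    (htmul : IsHilbertTensorMap tmul) (hT : IsTensorOp tmul A B T) : ‖T‖ ≤ ‖A‖ * ‖B‖ := by
  have hS : IsTensorOp tmul (A† * A) (B† * B) (T† * T) := (hT.adjoint htmul).mul hT
  have hnorm : ‖A† * A‖ * ‖B† * B‖ = (‖A‖ * ‖B‖) ^ 2 := by
    rw [← star_eq_adjoint, ← star_eq_adjoint, CStarRing.norm_star_mul_self,
      CStarRing.norm_star_mul_self]
    ring
  refine T.opNorm_le_of_dense htmul.dense_span (by positivity) fun u hu => ?_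
  obtain ⟨C, hC⟩ := hS.exists_norm_pow_apply_le htmul hu
  have hSu : ‖(T† * T) u‖ ≤ (‖A‖ * ‖B‖) ^ 2 * ‖u‖ := by
    rw [← hnorm, ← star_eq_adjoint]
    exact (IsSelfAdjoint.star_mul_self T).norm_apply_le_of_norm_pow_apply_le (by positivity) hC
  refine (pow_le_pow_iff_left₀ (norm_nonneg _) (by positivity) two_ne_zero).1 ?_
  calc ‖T u‖ ^ 2 = RCLike.re (inner ℂ ((T† * T) u) u) :=
        apply_norm_sq_eq_inner_adjoint_left T u
    _ ≤ ‖(T† * T) u‖ * ‖u‖ := re_inner_le_norm _ _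
    _ ≤ (‖A‖ * ‖B‖) ^ 2 * ‖u‖ * ‖u‖ := by gcongr
    _ = (‖A‖ * ‖B‖ * ‖u‖) ^ 2 := by ring

end IsTensorOp

end Tensor

section NumericalRadius

variable {E : Type*} [NormedAddCommGroup E] [InnerProductSpace ℂ E] [CompleteSpace E]

theorem norm_adjoint_mul_self_add_mul_adjoint_le (T : E →L[ℂ] E) :
    ‖T† * T + T * T†‖ ≤ 2 * ‖T‖ ^ 2 := by
  rw [← star_eq_adjoint]
  calc ‖star T * T + T * star T‖ ≤ ‖star T * T‖ + ‖T * star T‖ := norm_add_le _ _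
    _ = 2 * ‖T‖ ^ 2 := by
        rw [CStarRing.norm_star_mul_self, CStarRing.norm_self_mul_star]; ring

theorem norm_inner_apply_self_sq_le (T : E →L[ℂ] E) {x : E} (hx : ‖x‖ = 1) :
    ‖inner ℂ (T x) x‖ ^ 2 ≤ (1 / 2) * ‖T† * T + T * T†‖ := by
  have hT : ‖inner ℂ (T x) x‖ ≤ ‖T x‖ := by
    simpa [hx] using norm_inner_le_norm (𝕜 := ℂ) (T x) x
  have hT' : ‖inner ℂ (T x) x‖ ≤ ‖(T†) x‖ := by
    simpa [hx, adjoint_inner_right] using norm_inner_le_norm (𝕜 := ℂ) x ((T†) x)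
  have hsum : ‖T x‖ ^ 2 + ‖(T†) x‖ ^ 2 ≤ ‖T† * T + T * T†‖ :=
    calc ‖T x‖ ^ 2 + ‖(T†) x‖ ^ 2
        = RCLike.re (inner ℂ ((T† * T + T * T†) x) x) := by
          rw [apply_norm_sq_eq_inner_adjoint_left, apply_norm_sq_eq_inner_adjoint_left,
            adjoint_adjoint, add_apply, inner_add_left, map_add]
          rfl
      _ ≤ ‖(T† * T + T * T†) x‖ * ‖x‖ := re_inner_le_norm _ _
      _ ≤ ‖T† * T + T * T†‖ := by
          simpa [hx] using (T† * T + T * T†).le_opNorm x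
  nlinarith [sq_nonneg (‖T x‖ - ‖(T†) x‖), norm_nonneg (inner ℂ (T x) x)]

theorem nrad_sq_le (T : E →L[ℂ] E) :
    nrad T ^ 2 ≤ (1 / 2) * ‖T† * T + T * T†‖ := by
  have hbound : nrad T ≤ √((1 / 2) * ‖T† * T + T * T†‖) :=
    Real.iSup_le (fun x => Real.le_sqrt_of_sq_le (norm_inner_apply_self_sq_le T x.2))
      (Real.sqrt_nonneg _)
  calc nrad T ^ 2 ≤ √((1 / 2) * ‖T† * T + T * T†‖) ^ 2 := by
        gcongr; exact Real.iSup_nonneg fun _ => norm_nonneg _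
    _ = (1 / 2) * ‖T† * T + T * T†‖ := Real.sq_sqrt (by positivity)

end NumericalRadius

theorem stmt5
    {H K E : Type*} [NormedAddCommGroup H] [InnerProductSpace ℂ H] [CompleteSpace H]
    [NormedAddCommGroup K] [InnerProductSpace ℂ K] [CompleteSpace K]
    [NormedAddCommGroup E] [InnerProductSpace ℂ E] [CompleteSpace E]
    (tmul : H →ₗ[ℂ] K →ₗ[ℂ] E) (htmul : IsHilbertTensorMap tmul)
    (A : H →L[ℂ] H) (B : K →L[ℂ] K) (T : E →L[ℂ] E)
    (hT : IsTensorOp tmul A B T) :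
    nrad T ^ 2 ≤ (1 / 2) *
      ‖ContinuousLinearMap.adjoint T * T + T * ContinuousLinearMap.adjoint T‖ ∧
    (1 / 2) * ‖ContinuousLinearMap.adjoint T * T + T * ContinuousLinearMap.adjoint T‖ ≤
      ‖A‖ ^ 2 * ‖B‖ ^ 2 := by
  refine ⟨nrad_sq_le T, ?_⟩
  calc (1 / 2) * ‖T† * T + T * T†‖ ≤ ‖T‖ ^ 2 := by
        linarith [norm_adjoint_mul_self_add_mul_adjoint_le T]
    _ ≤ (‖A‖ * ‖B‖) ^ 2 := by gcongr; exact hT.norm_le htmul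
    _ = ‖A‖ ^ 2 * ‖B‖ ^ 2 := mul_pow _ _ _
end

section
/- For bounded linear operators A on H and B on K, w(A ⊗ B) ≥ (1/2)‖A‖‖B‖ + (1/4)| ‖A ⊗ B + A* ⊗ B*‖ − ‖A ⊗ B − A* ⊗ B*‖ |. -/
open ContinuousLinearMap

/-!
Since `‖x ⊗ y‖ = ‖x‖ ‖y‖`, we have `‖A‖ ‖B‖ ≤ ‖A ⊗ B‖`, so it suffices to show
`‖T‖ / 2 + |a - b| / 4 ≤ w(T)` for every operator `T`, where `a = ‖T + T*‖` and `b = ‖T - T*‖`.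
The self-adjoint operators `T + T*` and `i (T - T*)` have quadratic forms `2 Re ⟨T x, x⟩` and
`-2 Im ⟨T x, x⟩`, so `a, b ≤ 2 w(T)`; together with `2 ‖T‖ ≤ a + b` this gives
`‖T‖ / 2 + |a - b| / 4 ≤ (a + b) / 4 + |a - b| / 4 = max a b / 2 ≤ w(T)`.
-/

namespace ContinuousLinearMap

theorem norm_mul_norm_le_of_forall_norm_apply_mul_le
    {𝕜 E F E' F' : Type*} [NontriviallyNormedField 𝕜]
    [SeminormedAddCommGroup E] [NormedSpace 𝕜 E] [SeminormedAddCommGroup F] [NormedSpace 𝕜 F]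
    [SeminormedAddCommGroup E'] [NormedSpace 𝕜 E'] [SeminormedAddCommGroup F'] [NormedSpace 𝕜 F']
    {A : E →L[𝕜] F} {B : E' →L[𝕜] F'} {C : ℝ} (hC : 0 ≤ C)
    (h : ∀ x y, ‖A x‖ * ‖B y‖ ≤ C * (‖x‖ * ‖y‖)) : ‖A‖ * ‖B‖ ≤ C := by
  have hB : ∀ x, ‖A x‖ * ‖B‖ ≤ C * ‖x‖ := fun x => by
    rcases (norm_nonneg (A x)).eq_or_lt with h0 | hpos
    · rw [← h0, zero_mul]; positivity
    rw [mul_comm, ← le_div_iff₀ hpos]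
    refine B.opNorm_le_bound (by positivity) fun y => ?_
    rw [div_mul_eq_mul_div, le_div_iff₀ hpos]
    linarith [h x y]
  rcases (norm_nonneg B).eq_or_lt with h0 | hpos
  · rw [← h0, mul_zero]; exact hC
  rw [← le_div_iff₀ hpos]
  refine A.opNorm_le_bound (by positivity) fun x => ?_
  rw [div_mul_eq_mul_div, le_div_iff₀ hpos]
  exact hB x

section RCLike

variable {𝕜 E : Type*} [RCLike 𝕜] [NormedAddCommGroup E] [InnerProductSpace 𝕜 E]

theorem norm_le_of_abs_re_inner_self_le {S : E →L[𝕜] E} (hS : (S : E →ₗ[𝕜] E).IsSymmetric)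
    {c : ℝ} (hc : 0 ≤ c) (h : ∀ x, |RCLike.re (inner 𝕜 (S x) x)| ≤ c * ‖x‖ ^ 2) : ‖S‖ ≤ c := by
  rw [norm_eq_iSup_rayleighQuotient S hS]
  refine ciSup_le fun x => ?_
  rw [rayleighQuotient, reApplyInnerSelf_apply, abs_div, abs_sq]
  exact div_le_of_le_mul₀ (by positivity) hc (h x)

theorem norm_add_adjoint_le [CompleteSpace E] (T : E →L[𝕜] E) {c : ℝ} (hc : 0 ≤ c)
    (h : ∀ x, ‖(inner 𝕜 (T x) x : 𝕜)‖ ≤ c * ‖x‖ ^ 2) : ‖T + adjoint T‖ ≤ 2 * c := by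
  have hsa : IsSelfAdjoint (T + adjoint T) := star_eq_adjoint T ▸ IsSelfAdjoint.add_star_self T
  refine norm_le_of_abs_re_inner_self_le hsa.isSymmetric (by positivity) fun x => ?_
  have hre : RCLike.re (inner 𝕜 ((T + adjoint T) x) x) = 2 * RCLike.re (inner 𝕜 (T x) x) := by
    rw [add_apply, inner_add_left, adjoint_inner_left, map_add, ← inner_conj_symm x, RCLike.conj_re]
    ring
  rw [hre, abs_mul, abs_two]
  linarith [RCLike.abs_re_le_norm (inner 𝕜 (T x) x), h x]

end RCLike

variable {E : Type*} [NormedAddCommGroup E] [InnerProductSpace ℂ E] [CompleteSpace E]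

theorem norm_sub_adjoint_le (T : E →L[ℂ] E) {c : ℝ} (hc : 0 ≤ c)
    (h : ∀ x, ‖(inner ℂ (T x) x : ℂ)‖ ≤ c * ‖x‖ ^ 2) : ‖T - adjoint T‖ ≤ 2 * c := by
  have hI : (Complex.I • T) + adjoint (Complex.I • T) = Complex.I • (T - adjoint T) := by
    rw [map_smulₛₗ, Complex.conj_I, neg_smul, ← sub_eq_add_neg, smul_sub]
  have := norm_add_adjoint_le (Complex.I • T) hc fun x => by
    simpa [inner_smul_left] using h x
  rwa [hI, norm_smul, Complex.norm_I, one_mul] at this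

end ContinuousLinearMap

section NumericalRadius

variable {E : Type*} [NormedAddCommGroup E] [InnerProductSpace ℂ E]

theorem nrad_nonneg (T : E →L[ℂ] E) : 0 ≤ nrad T :=
  Real.iSup_nonneg fun _ => norm_nonneg _

theorem norm_inner_self_le_nrad_mul_sq (T : E →L[ℂ] E) (x : E) :
    ‖(inner ℂ (T x) x : ℂ)‖ ≤ nrad T * ‖x‖ ^ 2 := by
  rcases eq_or_ne x 0 with rfl | hx
  · simp
  have hx0 : 0 < ‖x‖ := norm_pos_iff.mpr hx
  have hbdd : BddAbove (Set.range fun u : {u : E // ‖u‖ = 1} => ‖(inner ℂ (T u.1) u.1 : ℂ)‖) :=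
    ⟨‖T‖, by
      rintro _ ⟨u, rfl⟩
      calc ‖(inner ℂ (T u.1) u.1 : ℂ)‖ ≤ ‖T u.1‖ * ‖u.1‖ := norm_inner_le_norm _ _
        _ ≤ ‖T‖ := by simpa [u.2] using T.le_opNorm u.1⟩
  set u : E := ((‖x‖⁻¹ : ℝ) : ℂ) • x
  have hu : ‖u‖ = 1 := by
    rw [norm_smul, Complex.norm_real, norm_inv, norm_norm, inv_mul_cancel₀ hx0.ne']
  have hle : ‖(inner ℂ (T u) u : ℂ)‖ ≤ nrad T := le_ciSup hbdd ⟨u, hu⟩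
  have hscale : ‖(inner ℂ (T u) u : ℂ)‖ = ‖(inner ℂ (T x) x : ℂ)‖ / ‖x‖ ^ 2 := by
    simp only [u, map_smul, inner_smul_left, inner_smul_right, norm_mul, RCLike.norm_conj,
      Complex.norm_real, norm_inv, norm_norm]
    ring
  rwa [hscale, div_le_iff₀ (by positivity)] at hle

theorem half_norm_add_quarter_abs_le_nrad [CompleteSpace E] (T : E →L[ℂ] E) :
    (1 / 2) * ‖T‖ + (1 / 4) * |‖T + adjoint T‖ - ‖T - adjoint T‖| ≤ nrad T := by
  have hre := T.norm_add_adjoint_le (nrad_nonneg T) (norm_inner_self_le_nrad_mul_sq T)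
  have him := T.norm_sub_adjoint_le (nrad_nonneg T) (norm_inner_self_le_nrad_mul_sq T)
  have hsum : 2 * ‖T‖ ≤ ‖T + adjoint T‖ + ‖T - adjoint T‖ := by
    calc 2 * ‖T‖ = ‖(T + adjoint T) + (T - adjoint T)‖ := by
          rw [add_add_sub_cancel, ← two_smul ℝ T, norm_smul, Real.norm_two]
      _ ≤ ‖T + adjoint T‖ + ‖T - adjoint T‖ := norm_add_le _ _
  cases abs_cases (‖T + adjoint T‖ - ‖T - adjoint T‖) <;> linarith

end NumericalRadius

section TensorProduct

variable {H K E : Type*} [NormedAddCommGroup H] [InnerProductSpace ℂ H]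
  [NormedAddCommGroup K] [InnerProductSpace ℂ K] [NormedAddCommGroup E] [InnerProductSpace ℂ E]
  {tmul : H →ₗ[ℂ] K →ₗ[ℂ] E}

theorem IsHilbertTensorMap.norm_tmul_s6 (htmul : IsHilbertTensorMap tmul) (x : H) (y : K) :
    ‖tmul x y‖ = ‖x‖ * ‖y‖ := by
  have h := htmul.inner_tmul x x y y
  simp only [inner_self_eq_norm_sq_to_K] at h
  exact (pow_left_inj₀ (norm_nonneg _) (by positivity) two_ne_zero).mp
    (by rw [mul_pow]; exact_mod_cast h)

theorem IsTensorOp.norm_mul_norm_le (htmul : IsHilbertTensorMap tmul) {A : H →L[ℂ] H}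
    {B : K →L[ℂ] K} {T : E →L[ℂ] E} (hT : IsTensorOp tmul A B T) : ‖A‖ * ‖B‖ ≤ ‖T‖ :=
  norm_mul_norm_le_of_forall_norm_apply_mul_le (norm_nonneg T) fun x y => by
    rw [← htmul.norm_tmul_s6, ← hT, ← htmul.norm_tmul_s6]
    exact T.le_opNorm _

end TensorProduct

theorem stmt6_general
    {H K E : Type*} [NormedAddCommGroup H] [InnerProductSpace ℂ H]
    [NormedAddCommGroup K] [InnerProductSpace ℂ K]
    [NormedAddCommGroup E] [InnerProductSpace ℂ E] [CompleteSpace E]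
    (tmul : H →ₗ[ℂ] K →ₗ[ℂ] E) (htmul : IsHilbertTensorMap tmul)
    (A : H →L[ℂ] H) (B : K →L[ℂ] K) (T : E →L[ℂ] E)
    (hT : IsTensorOp tmul A B T) :
    (1 / 2) * (‖A‖ * ‖B‖) +
      (1 / 4) * |‖T + ContinuousLinearMap.adjoint T‖ - ‖T - ContinuousLinearMap.adjoint T‖|
      ≤ nrad T := by
  have hw := half_norm_add_quarter_abs_le_nrad T
  have hAB := hT.norm_mul_norm_le htmul
  linarith

theorem stmt6
    {H K E : Type*} [NormedAddCommGroup H] [InnerProductSpace ℂ H] [CompleteSpace H]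
    [NormedAddCommGroup K] [InnerProductSpace ℂ K] [CompleteSpace K]
    [NormedAddCommGroup E] [InnerProductSpace ℂ E] [CompleteSpace E]
    (tmul : H →ₗ[ℂ] K →ₗ[ℂ] E) (htmul : IsHilbertTensorMap tmul)
    (A : H →L[ℂ] H) (B : K →L[ℂ] K) (T : E →L[ℂ] E)
    (hT : IsTensorOp tmul A B T) :
    (1 / 2) * (‖A‖ * ‖B‖) +
      (1 / 4) * |‖T + ContinuousLinearMap.adjoint T‖ - ‖T - ContinuousLinearMap.adjoint T‖|
      ≤ nrad T :=
  stmt6_general tmul htmul A B T hT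
end
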